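/- Let $F(x) = \mathbf{1}_{x>0}(1 - e^{-x^{\alpha}})$ with $\alpha > 0$ be the CDF of a Weibull-type distribution $m$, and let $\mu^n = \frac{1}{n}\sum_{k=1}^n \delta_{F^{-1}((2k-1)/(2n))}$. Then $W_1(m,\mu^n) = \mathcal{O}((\log n)^{1/\alpha}/n)$ as $n \to +\infty$. -/

import Mathlib

open MeasureTheory Set Filter
open scoped ENNReal

/-- The cumulative distribution function of a measure on `ℝ`. -/
noncomputable def cdfOf (m : Measure ℝ) (x : ℝ) : ℝ := (m (Iic x)).toReal

/-- Pseudo-inverse of a CDF: `F⁻¹(v) = inf {x | F x ≥ v}`. -/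
noncomputable def pinv (F : ℝ → ℝ) (v : ℝ) : ℝ := sInf {x | v ≤ F x}

/-- Optimal `n`-point quantization `μⁿ = (1/n) ∑ₖ δ_{F⁻¹((2k-1)/(2n))}`. -/
noncomputable def quant (m : Measure ℝ) (n : ℕ) : Measure ℝ :=
  ((n : ℝ≥0∞)⁻¹) • ∑ k ∈ Finset.Icc 1 n,
    Measure.dirac (pinv (cdfOf m) ((2 * (k : ℝ) - 1) / (2 * n)))

/-- Wasserstein-1 distance via pseudo-inverses of the CDFs. -/
noncomputable def W1 (m m' : Measure ℝ) : ℝ :=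
  ∫ v in Ioo (0 : ℝ) 1, |pinv (cdfOf m) v - pinv (cdfOf m') v|

/-!
The quantile function of `m` is `q v = (-log (1 - v)) ^ (1 / α)` and that of `μⁿ` is the step
function `v ↦ q ((2⌈vn⌉ - 1) / (2n))`, so `W₁(m, μⁿ) = ∫₀¹ |q v - q ((2⌈vn⌉ - 1) / (2n))| dv`.
Below `c = 1 - 1/(2n)` the point `v` and its cell midpoint are `1/(2n)`-close, so the error is at
most `G (v + 1/(2n)) - G (v - 1/(2n))` for `G` the monotone function `q` clamped to `[0, c]`; these
shifted integrals telescope to at most `q c / n = (log 2n) ^ (1/α) / n`. On the last half-cell the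
error is at most `∫_c^1 q = ∫_0^δ (-log u) ^ (1/α) du` with `δ = 1/(2n)`, and the comparison
`(-log u) ^ β ≤ (-log δ) ^ β (δ / u) ^ (1/2)` (valid once `δ ≤ e^(-2β)`) bounds it by
`2δ (log 2n) ^ (1/α)`. Finally `log 2n ≤ 2 log n`.
-/

theorem ceil_mul_mem_Icc {n : ℕ} (hn : 0 < n) {v : ℝ} (hv : v ∈ Ioc 0 1) :
    ⌈v * n⌉₊ ∈ Icc 1 n := by
  have hn' : (0 : ℝ) < n := Nat.cast_pos.mpr hn
  exact ⟨Nat.one_le_ceil_iff.mpr (mul_pos hv.1 hn'),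
    Nat.ceil_le.mpr (by simpa using mul_le_mul_of_nonneg_right hv.2 hn'.le)⟩

theorem cdfOf_empirical (x : ℕ → ℝ) (n : ℕ) (t : ℝ) :
    cdfOf ((n : ℝ≥0∞)⁻¹ • ∑ k ∈ Finset.Icc 1 n, Measure.dirac (x k)) t =
      ((Finset.Icc 1 n).filter (fun k => x k ≤ t)).card / n := by
  simp only [cdfOf, Measure.smul_apply, Measure.finsetSum_apply,
    Measure.dirac_apply' _ measurableSet_Iic, indicator_apply, Set.mem_Iic, Pi.one_apply,
    Finset.sum_boole, smul_eq_mul, ENNReal.toReal_mul, ENNReal.toReal_inv,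
    ENNReal.toReal_natCast, inv_mul_eq_div]

theorem le_card_filter_le_iff {x : ℕ → ℝ} {n K : ℕ} (hx : MonotoneOn x (Icc 1 n))
    (hK : K ∈ Icc 1 n) (t : ℝ) :
    K ≤ ((Finset.Icc 1 n).filter (fun k => x k ≤ t)).card ↔ x K ≤ t := by
  obtain ⟨hK1, hKn⟩ := hK
  constructor
  · intro hcard
    by_contra! hlt
    have hsub : (Finset.Icc 1 n).filter (fun k => x k ≤ t) ⊆ Finset.Icc 1 (K - 1) := by
      intro k hk
      obtain ⟨hk, hkt⟩ := Finset.mem_filter.mp hk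
      obtain ⟨hk1, hkn⟩ := Finset.mem_Icc.mp hk
      refine Finset.mem_Icc.mpr ⟨hk1, Nat.le_sub_one_of_lt (lt_of_not_ge fun hKk => ?_)⟩
      exact (hlt.trans_le (hx ⟨hK1, hKn⟩ ⟨hk1, hkn⟩ hKk)).not_ge hkt
    have := Finset.card_le_card hsub
    simp only [Nat.card_Icc] at this
    omega
  · intro hKt
    have hsub : Finset.Icc 1 K ⊆ (Finset.Icc 1 n).filter (fun k => x k ≤ t) := by
      intro k hk
      obtain ⟨hk1, hkK⟩ := Finset.mem_Icc.mp hk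
      exact Finset.mem_filter.mpr ⟨Finset.mem_Icc.mpr ⟨hk1, hkK.trans hKn⟩,
        (hx ⟨hk1, hkK.trans hKn⟩ ⟨hK1, hKn⟩ hkK).trans hKt⟩
    simpa using Finset.card_le_card hsub

theorem pinv_cdfOf_empirical {x : ℕ → ℝ} {n : ℕ} (hn : 0 < n) (hx : MonotoneOn x (Icc 1 n))
    {v : ℝ} (hv : v ∈ Ioc 0 1) :
    pinv (cdfOf ((n : ℝ≥0∞)⁻¹ • ∑ k ∈ Finset.Icc 1 n, Measure.dirac (x k))) v =
      x ⌈v * n⌉₊ := by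
  have hn' : (0 : ℝ) < n := Nat.cast_pos.mpr hn
  have hset : {t | v ≤ cdfOf ((n : ℝ≥0∞)⁻¹ • ∑ k ∈ Finset.Icc 1 n, Measure.dirac (x k)) t} =
      Ici (x ⌈v * n⌉₊) := by
    ext t
    rw [mem_ofPred_eq, cdfOf_empirical, le_div_iff₀ hn', ← Nat.ceil_le, mem_Ici,
      le_card_filter_le_iff hx (ceil_mul_mem_Icc hn hv)]
  rw [pinv, hset, csInf_Ici]

theorem midpoint_mem_Icc {n k : ℕ} (hk : k ∈ Icc 1 n) :
    (2 * (k : ℝ) - 1) / (2 * n) ∈ Icc (1 / (2 * n : ℝ)) (1 - 1 / (2 * n)) := by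
  have hk1 : (1 : ℝ) ≤ k := Nat.one_le_cast.mpr hk.1
  have hkn : (k : ℝ) ≤ n := Nat.cast_le.mpr hk.2
  have hn : (0 : ℝ) < 2 * n := by linarith
  rw [one_sub_div hn.ne']
  exact ⟨div_le_div_of_nonneg_right (by linarith) hn.le,
    div_le_div_of_nonneg_right (by linarith) hn.le⟩

theorem midpoint_mem_Ioo {n k : ℕ} (hk : k ∈ Icc 1 n) :
    (2 * (k : ℝ) - 1) / (2 * n) ∈ Ioo 0 1 := by
  have hn : (0 : ℝ) < 2 * n := by
    have : (1 : ℝ) ≤ n := Nat.one_le_cast.mpr (hk.1.trans hk.2)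
    linarith
  have hmem := midpoint_mem_Icc hk
  exact ⟨(by positivity : (0 : ℝ) < 1 / (2 * n)).trans_le hmem.1,
    hmem.2.trans_lt (by simp only [sub_lt_self_iff]; positivity)⟩

theorem abs_midpoint_ceil_sub_le {n : ℕ} (hn : 0 < n) {v : ℝ} (hv : 0 ≤ v) :
    |(2 * (⌈v * n⌉₊ : ℝ) - 1) / (2 * n) - v| ≤ 1 / (2 * n) := by
  have hn' : (0 : ℝ) < 2 * n := by positivity
  have hlow : v * n ≤ ⌈v * n⌉₊ := Nat.le_ceil _
  have hup : (⌈v * n⌉₊ : ℝ) < v * n + 1 := Nat.ceil_lt_add_one (by positivity)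
  have hsplit : (2 * (⌈v * n⌉₊ : ℝ) - 1) / (2 * n) - v =
      (2 * ((⌈v * n⌉₊ : ℝ) - v * n) - 1) / (2 * n) := by
    field_simp
    ring
  rw [hsplit, abs_div, abs_of_pos hn', div_le_div_iff_of_pos_right hn', abs_le]
  constructor <;> linarith

theorem ceil_mul_eq_of_lt {n : ℕ} (hn : 0 < n) {v : ℝ} (hv : 1 - 1 / (2 * n) < v)
    (hv1 : v ≤ 1) : ⌈v * n⌉₊ = n := by
  have hn' : (0 : ℝ) < n := Nat.cast_pos.mpr hn
  have hvn : (n : ℝ) - 1 < v * n := by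
    have : (1 - 1 / (2 * n)) * n = (n : ℝ) - 1 / 2 := by field_simp
    nlinarith
  have hlt : (n : ℝ) < ⌈v * n⌉₊ + 1 := by linarith [Nat.le_ceil (v * n)]
  have hle : ⌈v * n⌉₊ ≤ n := Nat.ceil_le.mpr (by nlinarith)
  have : n < ⌈v * n⌉₊ + 1 := by exact_mod_cast hlt
  omega

theorem Monotone.intervalIntegral_sub_shift_le {G : ℝ → ℝ} (hG : Monotone G) (a b : ℝ)
    {h : ℝ} (hh : 0 ≤ h) :
    ∫ v in a..b, (G (v + h) - G (v - h)) ≤ 2 * h * (G (b + h) - G (a - h)) := by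
  have hint : ∀ c d : ℝ, IntervalIntegrable G volume c d := fun _ _ => hG.intervalIntegrable
  have hupper : ∫ u in (b - h)..(b + h), G u ≤ 2 * h * G (b + h) := by
    calc ∫ u in (b - h)..(b + h), G u ≤ ∫ _ in (b - h)..(b + h), G (b + h) :=
          intervalIntegral.integral_mono_on (by linarith) (hint _ _) intervalIntegrable_const
            fun u hu => hG hu.2
      _ = 2 * h * G (b + h) := by simp only [intervalIntegral.integral_const, smul_eq_mul]; ring
  have hlower : 2 * h * G (a - h) ≤ ∫ u in (a - h)..(a + h), G u := by
    calc 2 * h * G (a - h) = ∫ _ in (a - h)..(a + h), G (a - h) := by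
          simp only [intervalIntegral.integral_const, smul_eq_mul]; ring
      _ ≤ ∫ u in (a - h)..(a + h), G u :=
          intervalIntegral.integral_mono_on (by linarith) intervalIntegrable_const (hint _ _)
            fun u hu => hG hu.1
  have hplus : IntervalIntegrable (fun v => G (v + h)) volume a b :=
    Monotone.intervalIntegrable fun _ _ huv => hG (by linarith)
  have hminus : IntervalIntegrable (fun v => G (v - h)) volume a b :=
    Monotone.intervalIntegrable fun _ _ huv => hG (by linarith)
  rw [intervalIntegral.integral_sub hplus hminus,
    intervalIntegral.integral_comp_add_right, intervalIntegral.integral_comp_sub_right,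
    intervalIntegral.integral_interval_sub_interval_comm' (hint _ _) (hint _ _) (hint _ _)]
  linarith

theorem abs_sub_comp_midpoint_ceil_le {q G : ℝ → ℝ} (hq : MonotoneOn q (Ico 0 1))
    (hq0 : 0 ≤ q 0) {n : ℕ} (hn : 0 < n) (hG : Monotone G)
    (hGq : EqOn G q (Icc 0 (1 - 1 / (2 * n)))) {v : ℝ} (hv : v ∈ Ioo 0 1) :
    |q v - q ((2 * (⌈v * n⌉₊ : ℝ) - 1) / (2 * n))| ≤
      (G (v + 1 / (2 * n)) - G (v - 1 / (2 * n))) +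
        (Ioo (1 - 1 / (2 * n : ℝ)) 1).indicator q v := by
  set h : ℝ := 1 / (2 * n)
  set w : ℝ := (2 * (⌈v * n⌉₊ : ℝ) - 1) / (2 * n)
  have hn' : (0 : ℝ) < n := Nat.cast_pos.mpr hn
  have hh : 0 < h := by positivity
  have hw : |w - v| ≤ h := abs_midpoint_ceil_sub_le hn hv.1.le
  have hmid := midpoint_mem_Icc (ceil_mul_mem_Icc hn (Ioo_subset_Ioc_self hv))
  have hw0 : 0 ≤ w := (by positivity : (0 : ℝ) ≤ 1 / (2 * n)).trans hmid.1
  have hwc : w ≤ 1 - h := hmid.2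
  rcases le_or_gt v (1 - h) with hvc | hvc
  · rw [indicator_of_notMem (fun hmem => (not_lt.mpr hvc) hmem.1), add_zero,
      ← hGq ⟨hv.1.le, hvc⟩, ← hGq ⟨hw0, hwc⟩, abs_sub_le_iff]
    rw [abs_le] at hw
    constructor <;> linarith [hG (show v - h ≤ w by linarith), hG (show w ≤ v + h by linarith),
      hG (show v - h ≤ v by linarith), hG (show v ≤ v + h by linarith)]
  · have hwv : w = 1 - h := by
      simp only [w, h, ceil_mul_eq_of_lt hn hvc hv.2.le]
      field_simp
    rw [indicator_of_mem (show v ∈ Ioo (1 - h) 1 from ⟨hvc, hv.2⟩), hwv]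
    have hqc : q (1 - h) ≤ q v := hq ⟨by linarith, by linarith⟩ ⟨hv.1.le, hv.2⟩ hvc.le
    have hq0c : q 0 ≤ q (1 - h) := hq ⟨le_rfl, one_pos⟩ ⟨by linarith, by linarith⟩ (by linarith)
    have hshift : 0 ≤ G (v + h) - G (v - h) := sub_nonneg.mpr (hG (by linarith))
    rw [abs_of_nonneg (by linarith)]
    linarith

theorem integral_abs_sub_comp_midpoint_ceil_le {q : ℝ → ℝ} (hq : MonotoneOn q (Ico 0 1))
    (hq0 : 0 ≤ q 0) {n : ℕ} (hn : 0 < n) (hint : IntegrableOn q (Ioo (1 - 1 / (2 * n)) 1)) :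
    ∫ v in Ioo (0 : ℝ) 1, |q v - q ((2 * (⌈v * n⌉₊ : ℝ) - 1) / (2 * n))| ≤
      q (1 - 1 / (2 * n)) / n + ∫ v in Ioo (1 - 1 / (2 * n : ℝ)) 1, q v := by
  set h : ℝ := 1 / (2 * n)
  set c : ℝ := 1 - h
  set G : ℝ → ℝ := fun u => q (max 0 (min u c))
  have hn' : (0 : ℝ) < n := Nat.cast_pos.mpr hn
  have hh : 0 < h := by positivity
  have hc0 : 0 ≤ c := by
    have : h ≤ 1 / 2 := by
      simp only [h]
      rw [div_le_div_iff₀ (by positivity) two_pos]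
      have : (1 : ℝ) ≤ n := Nat.one_le_cast.mpr hn
      linarith
    simp only [c]
    linarith
  have hclamp : ∀ u, max 0 (min u c) ∈ Ico (0 : ℝ) 1 := fun u =>
    ⟨le_max_left _ _, max_lt one_pos ((min_le_right _ _).trans_lt (by simp only [c]; linarith))⟩
  have hG : Monotone G := fun u u' huu' =>
    hq (hclamp u) (hclamp u') (max_le_max le_rfl (min_le_min_right c huu'))
  have hGq : EqOn G q (Icc 0 c) := fun u hu => by
    simp only [G, min_eq_left hu.2, max_eq_right hu.1]
  have hshift_int : IntegrableOn (fun v => G (v + h) - G (v - h)) (Ioo 0 1) :=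
    (intervalIntegrable_iff_integrableOn_Ioo_of_le zero_le_one).mp
      ((Monotone.intervalIntegrable fun _ _ huv => hG (by linarith)).sub
        (Monotone.intervalIntegrable fun _ _ huv => hG (by linarith)))
  have hind_int : IntegrableOn ((Ioo c 1).indicator q) (Ioo 0 1) :=
    (hint.integrable_indicator measurableSet_Ioo).integrableOn
  have hGtop : G (1 + h) = q c := by
    simp only [G, min_eq_right (show c ≤ 1 + h by simp only [c]; linarith), max_eq_right hc0]
  have hGbot : G (0 - h) = q 0 := by
    simp only [G, min_eq_left (show 0 - h ≤ c by linarith),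
      max_eq_left (show 0 - h ≤ 0 by linarith)]
  calc ∫ v in Ioo (0 : ℝ) 1, |q v - q ((2 * (⌈v * n⌉₊ : ℝ) - 1) / (2 * n))|
      ≤ ∫ v in Ioo (0 : ℝ) 1, ((G (v + h) - G (v - h)) + (Ioo c 1).indicator q v) := by
        refine integral_mono_of_nonneg (ae_of_all _ fun _ => abs_nonneg _)
          (hshift_int.add hind_int) ((ae_restrict_iff' measurableSet_Ioo).mpr (ae_of_all _ ?_))
        exact fun v hv => abs_sub_comp_midpoint_ceil_le hq hq0 hn hG hGq hv
    _ = (∫ v in (0 : ℝ)..1, (G (v + h) - G (v - h))) + ∫ v in Ioo c 1, q v := by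
        rw [integral_add hshift_int hind_int, intervalIntegral.integral_of_le zero_le_one,
          integral_Ioc_eq_integral_Ioo, setIntegral_indicator measurableSet_Ioo,
          inter_eq_right.mpr (Ioo_subset_Ioo_left hc0)]
    _ ≤ 2 * h * (G (1 + h) - G (0 - h)) + ∫ v in Ioo c 1, q v := by
        gcongr
        exact hG.intervalIntegral_sub_shift_le 0 1 hh.le
    _ ≤ q c / n + ∫ v in Ioo c 1, q v := by
        rw [hGtop, hGbot]
        have : 2 * h = 1 / n := by simp only [h]; field_simp
        rw [this, one_div_mul_eq_div]
        gcongr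
        linarith

theorem rpow_le_rpow_mul_exp {β T t : ℝ} (hβ : 0 < β) (hT : 2 * β ≤ T) (ht : T ≤ t) :
    t ^ β ≤ T ^ β * Real.exp ((t - T) / 2) := by
  have hT0 : 0 < T := by linarith
  have ht0 : 0 < t := by linarith
  have hkey : β * Real.log (t / T) ≤ (t - T) / 2 :=
    calc β * Real.log (t / T) ≤ β * (t / T - 1) :=
          mul_le_mul_of_nonneg_left (Real.log_le_sub_one_of_pos (by positivity)) hβ.le
      _ = (t - T) * (β / T) := by field_simp
      _ ≤ (t - T) * (1 / 2) :=
          mul_le_mul_of_nonneg_left (by rw [div_le_div_iff₀ hT0 two_pos]; linarith)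
            (by linarith)
      _ = (t - T) / 2 := by ring
  calc t ^ β = T ^ β * (t / T) ^ β := by
        rw [Real.div_rpow (by linarith) hT0.le, mul_div_cancel₀ _ (by positivity)]
    _ ≤ T ^ β * Real.exp ((t - T) / 2) := by
        gcongr
        rw [Real.rpow_def_of_pos (by positivity), mul_comm]
        exact Real.exp_le_exp.mpr hkey

theorem neg_log_rpow_le {β δ u : ℝ} (hβ : 0 < β) (hδ : δ ≤ Real.exp (-(2 * β))) (hu : 0 < u)
    (huδ : u ≤ δ) :
    (-Real.log u) ^ β ≤ (-Real.log δ) ^ β * δ ^ (1 / 2 : ℝ) * u ^ (-(1 / 2) : ℝ) := by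
  have hδ0 : 0 < δ := hu.trans_le huδ
  have hT : 2 * β ≤ -Real.log δ := by
    have := Real.log_le_log hδ0 hδ
    rw [Real.log_exp] at this
    linarith
  have hexp : Real.exp ((-Real.log u - -Real.log δ) / 2) =
      δ ^ (1 / 2 : ℝ) * u ^ (-(1 / 2) : ℝ) := by
    rw [Real.rpow_def_of_pos hδ0, Real.rpow_def_of_pos hu, ← Real.exp_add]
    ring_nf
  rw [mul_assoc, ← hexp]
  exact rpow_le_rpow_mul_exp hβ hT (neg_le_neg (Real.log_le_log hu huδ))

theorem intervalIntegrable_neg_log_rpow {β δ : ℝ} (hβ : 0 < β) (hδ0 : 0 < δ)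
    (hδ : δ ≤ Real.exp (-(2 * β))) :
    IntervalIntegrable (fun u => (-Real.log u) ^ β) volume 0 δ := by
  refine ((intervalIntegral.intervalIntegrable_rpow' (r := -(1 / 2)) (by norm_num)).const_mul
    ((-Real.log δ) ^ β * δ ^ (1 / 2 : ℝ))).mono_fun' ?_ ?_
  · exact ((Real.continuous_rpow_const hβ.le).measurable.comp
      Real.measurable_log.neg).aestronglyMeasurable
  · rw [uIoc_of_le hδ0.le]
    refine (ae_restrict_iff' measurableSet_Ioc).mpr (ae_of_all _ fun u hu => ?_)
    dsimp only
    have hδ1 : δ ≤ 1 := hδ.trans (Real.exp_le_one_iff.mpr (by linarith))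
    rw [Real.norm_eq_abs, abs_of_nonneg (Real.rpow_nonneg
      (neg_nonneg.mpr (Real.log_nonpos hu.1.le (hu.2.trans hδ1))) _)]
    exact neg_log_rpow_le hβ hδ hu.1 hu.2

theorem integral_neg_log_rpow_le {β δ : ℝ} (hβ : 0 < β) (hδ0 : 0 < δ)
    (hδ : δ ≤ Real.exp (-(2 * β))) :
    ∫ u in (0 : ℝ)..δ, (-Real.log u) ^ β ≤ 2 * δ * (-Real.log δ) ^ β := by
  have hdom : IntervalIntegrable (fun u : ℝ => u ^ (-(1 / 2) : ℝ)) volume 0 δ :=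
    intervalIntegral.intervalIntegrable_rpow' (by norm_num)
  calc ∫ u in (0 : ℝ)..δ, (-Real.log u) ^ β
      ≤ ∫ u in (0 : ℝ)..δ, (-Real.log δ) ^ β * δ ^ (1 / 2 : ℝ) * u ^ (-(1 / 2) : ℝ) := by
        refine intervalIntegral.integral_mono_ae_restrict hδ0.le
          (intervalIntegrable_neg_log_rpow hβ hδ0 hδ) (hdom.const_mul _) ?_
        refine (ae_restrict_iff' measurableSet_Icc).mpr ?_
        filter_upwards [Measure.ae_ne volume 0] with u hu0 hu
        exact neg_log_rpow_le hβ hδ (lt_of_le_of_ne hu.1 (Ne.symm hu0)) hu.2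
    _ = 2 * δ * (-Real.log δ) ^ β := by
        rw [intervalIntegral.integral_const_mul, integral_rpow (Or.inl (by norm_num)),
          Real.zero_rpow (by norm_num)]
        have hδδ : δ ^ (1 / 2 : ℝ) * δ ^ (-(1 / 2) + 1 : ℝ) = δ := by
          rw [← Real.rpow_add hδ0]; norm_num
        norm_num at hδδ ⊢
        linear_combination (2 * (-Real.log δ) ^ β) * hδδ

noncomputable def weibullQuantile (α u : ℝ) : ℝ := (-Real.log (1 - u)) ^ (1 / α)

theorem weibullQuantile_monotoneOn {α : ℝ} (hα : 0 ≤ α) :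
    MonotoneOn (weibullQuantile α) (Ico 0 1) := fun u hu u' hu' huu' =>
  Real.rpow_le_rpow (neg_nonneg.mpr (Real.log_nonpos (by linarith [hu.2]) (by linarith [hu.1])))
    (neg_le_neg (Real.log_le_log (by linarith [hu'.2]) (by linarith))) (by positivity)

theorem pinv_cdfOf_eq_weibullQuantile {α : ℝ} (hα : 0 < α) {m : Measure ℝ}
    (hcdf : ∀ x : ℝ, cdfOf m x = if 0 < x then 1 - Real.exp (-(x ^ α)) else 0)
    {v : ℝ} (hv : v ∈ Ioo 0 1) : pinv (cdfOf m) v = weibullQuantile α v := by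
  have hL : 0 < -Real.log (1 - v) := neg_pos.mpr (Real.log_neg (by linarith [hv.2])
    (by linarith [hv.1]))
  have hq : 0 < weibullQuantile α v := Real.rpow_pos_of_pos hL _
  have hset : {x | v ≤ cdfOf m x} = Ici (weibullQuantile α v) := by
    ext x
    rw [mem_ofPred_eq, mem_Ici, hcdf x]
    rcases le_or_gt x 0 with hx | hx
    · rw [if_neg hx.not_gt]
      constructor <;> intro h <;> linarith [hv.1]
    · rw [if_pos hx, weibullQuantile, one_div, Real.rpow_inv_le_iff_of_pos hL.le hx.le hα,
        neg_le, Real.le_log_iff_exp_le (by linarith [hv.2])]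
      constructor <;> intro h <;> linarith
  rw [pinv, hset, csInf_Ici]

theorem pinv_cdfOf_quant {α : ℝ} (hα : 0 < α) {m : Measure ℝ}
    (hcdf : ∀ x : ℝ, cdfOf m x = if 0 < x then 1 - Real.exp (-(x ^ α)) else 0)
    {n : ℕ} (hn : 0 < n) {v : ℝ} (hv : v ∈ Ioo 0 1) :
    pinv (cdfOf (quant m n)) v = weibullQuantile α ((2 * (⌈v * n⌉₊ : ℝ) - 1) / (2 * n)) := by
  have hquantile : ∀ k ∈ Icc 1 n, pinv (cdfOf m) ((2 * (k : ℝ) - 1) / (2 * n)) =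
      weibullQuantile α ((2 * (k : ℝ) - 1) / (2 * n)) := fun k hk =>
    pinv_cdfOf_eq_weibullQuantile hα hcdf (midpoint_mem_Ioo hk)
  have hmono : MonotoneOn (fun k : ℕ => pinv (cdfOf m) ((2 * (k : ℝ) - 1) / (2 * n)))
      (Icc 1 n) := fun j hj k hk hjk => by
    dsimp only
    rw [hquantile j hj, hquantile k hk]
    exact weibullQuantile_monotoneOn hα.le (Ioo_subset_Ico_self (midpoint_mem_Ioo hj))
      (Ioo_subset_Ico_self (midpoint_mem_Ioo hk))
      (div_le_div_of_nonneg_right (by gcongr) (by positivity))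
  rw [quant, pinv_cdfOf_empirical hn hmono (Ioo_subset_Ioc_self hv),
    hquantile _ (ceil_mul_mem_Icc hn (Ioo_subset_Ioc_self hv))]

theorem intervalIntegrable_weibullQuantile {α δ : ℝ} (hα : 0 < α) (hδ0 : 0 < δ)
    (hδ : δ ≤ Real.exp (-(2 * (1 / α)))) :
    IntervalIntegrable (weibullQuantile α) volume (1 - δ) 1 := by
  have := (intervalIntegrable_neg_log_rpow (by positivity) hδ0 hδ).comp_sub_left 1
  rw [sub_zero] at this
  exact this.symm

theorem integral_weibullQuantile_le {α δ : ℝ} (hα : 0 < α) (hδ0 : 0 < δ)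
    (hδ : δ ≤ Real.exp (-(2 * (1 / α)))) :
    ∫ v in Ioo (1 - δ) 1, weibullQuantile α v ≤ 2 * δ * (-Real.log δ) ^ (1 / α) := by
  rw [← integral_Ioc_eq_integral_Ioo, ← intervalIntegral.integral_of_le (by linarith)]
  have := intervalIntegral.integral_comp_sub_left (fun u => (-Real.log u) ^ (1 / α))
    (a := 1 - δ) (b := 1) 1
  rw [sub_self, sub_sub_cancel] at this
  simp only [weibullQuantile]
  rw [this]
  exact integral_neg_log_rpow_le (by positivity) hδ0 hδ

theorem W1_quant_le {α : ℝ} (hα : 0 < α) {m : Measure ℝ}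
    (hcdf : ∀ x : ℝ, cdfOf m x = if 0 < x then 1 - Real.exp (-(x ^ α)) else 0)
    {n : ℕ} (hn : 0 < n) (hδ : 1 / (2 * n : ℝ) ≤ Real.exp (-(2 * (1 / α)))) :
    W1 m (quant m n) ≤ 2 * Real.log (2 * n) ^ (1 / α) / n := by
  have hδ0 : (0 : ℝ) < 1 / (2 * n) := by positivity
  have hlog : -Real.log (1 / (2 * n : ℝ)) = Real.log (2 * n) := by
    rw [one_div, Real.log_inv, neg_neg]
  have hW1 : W1 m (quant m n) = ∫ v in Ioo (0 : ℝ) 1,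
      |weibullQuantile α v - weibullQuantile α ((2 * (⌈v * n⌉₊ : ℝ) - 1) / (2 * n))| :=
    setIntegral_congr_fun measurableSet_Ioo fun v hv => by
      rw [pinv_cdfOf_eq_weibullQuantile hα hcdf hv, pinv_cdfOf_quant hα hcdf hn hv]
  have hint : IntegrableOn (weibullQuantile α) (Ioo (1 - 1 / (2 * n)) 1) :=
    (intervalIntegrable_iff_integrableOn_Ioo_of_le (by linarith)).mp
      (intervalIntegrable_weibullQuantile hα hδ0 hδ)
  calc W1 m (quant m n)
      ≤ weibullQuantile α (1 - 1 / (2 * n)) / n +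
          ∫ v in Ioo (1 - 1 / (2 * n : ℝ)) 1, weibullQuantile α v := by
        rw [hW1]
        exact integral_abs_sub_comp_midpoint_ceil_le (weibullQuantile_monotoneOn hα.le)
          (Real.rpow_nonneg (by simp) _) hn hint
    _ ≤ Real.log (2 * n) ^ (1 / α) / n + 2 * (1 / (2 * n)) * Real.log (2 * n) ^ (1 / α) := by
        rw [weibullQuantile, sub_sub_cancel, hlog]
        gcongr
        rw [← hlog]
        exact integral_weibullQuantile_le hα hδ0 hδ
    _ = 2 * Real.log (2 * n) ^ (1 / α) / n := by
        field_simp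
        ring

theorem log_two_mul_rpow_le {x β : ℝ} (hx : 2 ≤ x) (hβ : 0 ≤ β) :
    Real.log (2 * x) ^ β ≤ 2 ^ β * Real.log x ^ β := by
  have hlog : 0 ≤ Real.log x := Real.log_nonneg (by linarith)
  rw [← Real.mul_rpow zero_le_two hlog, Real.log_mul two_ne_zero (by linarith)]
  exact Real.rpow_le_rpow (add_nonneg (Real.log_nonneg one_le_two) hlog)
    (by linarith [Real.log_le_log two_pos hx]) hβ

theorem stmt14_general (α : ℝ) (hα : 0 < α) (m : Measure ℝ)
    (hcdf : ∀ x : ℝ, cdfOf m x = if 0 < x then 1 - Real.exp (-(x ^ α)) else 0) :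
    ∃ C : ℝ, ∀ᶠ n : ℕ in atTop,
      W1 m (quant m n) ≤ C * (Real.log n) ^ (1 / α) / n := by
  refine ⟨2 * 2 ^ (1 / α), ?_⟩
  have hlarge : ∀ᶠ n : ℕ in atTop, 1 / (2 * n : ℝ) ≤ Real.exp (-(2 * (1 / α))) := by
    filter_upwards [tendsto_natCast_atTop_atTop.eventually_ge_atTop (Real.exp (2 * (1 / α)))]
      with n hn
    rw [Real.exp_neg, ← one_div]
    exact one_div_le_one_div_of_le (Real.exp_pos _) (by linarith [Real.exp_pos (2 * (1 / α))])
  filter_upwards [eventually_ge_atTop 2, hlarge] with n hn hδ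
  have hn2 : (2 : ℝ) ≤ n := by exact_mod_cast hn
  calc W1 m (quant m n) ≤ 2 * Real.log (2 * n) ^ (1 / α) / n :=
        W1_quant_le hα hcdf (by omega) hδ
    _ ≤ 2 * 2 ^ (1 / α) * Real.log n ^ (1 / α) / n := by
        rw [mul_assoc]
        gcongr
        exact log_two_mul_rpow_le hn2 (by positivity)

theorem stmt14 (α : ℝ) (hα : 0 < α) (m : Measure ℝ) [IsProbabilityMeasure m]
    (hcdf : ∀ x : ℝ, cdfOf m x = if 0 < x then 1 - Real.exp (-(x ^ α)) else 0) :
    ∃ C : ℝ, ∀ᶠ n : ℕ in atTop,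
      W1 m (quant m n) ≤ C * (Real.log n) ^ (1 / α) / n :=
  stmt14_general α hα m hcdf
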